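/- arXiv:1512.03496 — 2 statements merged into one kernel-verified Lean document; each statement's English description precedes it below -/
import Mathlib

section
/- Let r satisfy the relativistic two-body equation and let h(t) = r(t) × r'(t). Then for every t one has h(t) = exp(4ε(1/‖r(0)‖ − 1/‖r(t)‖)) • h(0). In particular the direction of the angular momentum vector is constant in time. -/
/-!
The acceleration lies in the plane of `r` and `r'`, so `h' = r × r''` equals
`(4ε⟨r, r'⟩/‖r‖³) • h`. That coefficient is the derivative of `φ = -4ε/‖r‖`, and every solution
of `h' = φ' • h` is `exp (φ t - φ 0) • h 0`, since `exp (-φ) • h` has zero derivative.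
-/

noncomputable def cross3 (a b : EuclideanSpace ℝ (Fin 3)) : EuclideanSpace ℝ (Fin 3) :=
  WithLp.toLp 2 ![a 1 * b 2 - a 2 * b 1, a 2 * b 0 - a 0 * b 2, a 0 * b 1 - a 1 * b 0]

open scoped RealInnerProductSpace

theorem HasDerivAt.norm {F : Type*} [NormedAddCommGroup F] [InnerProductSpace ℝ F]
    {f : ℝ → F} {f' : F} {x : ℝ} (hf : HasDerivAt f f' x) (h0 : f x ≠ 0) :
    HasDerivAt (fun y => ‖f y‖) (⟪f x, f'⟫ / ‖f x‖) x := by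
  have h := hf.norm_sq.sqrt (by positivity)
  simp only [Real.sqrt_sq (norm_nonneg _)] at h
  convert h using 1
  field_simp

theorem eq_exp_sub_smul_of_hasDerivAt {E : Type*} [NormedAddCommGroup E] [NormedSpace ℝ E]
    {f : ℝ → E} {φ φ' : ℝ → ℝ} (hφ : ∀ t, HasDerivAt φ (φ' t) t)
    (hf : ∀ t, HasDerivAt f (φ' t • f t) t) (t s : ℝ) :
    f t = Real.exp (φ t - φ s) • f s := by
  have hg : ∀ u, HasDerivAt (fun u => Real.exp (-φ u) • f u) 0 u := fun u => by
    refine ((hφ u).neg.exp.smul (hf u)).congr_deriv ?_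
    rw [smul_smul]; module
  have hconst :=
    is_const_of_deriv_eq_zero (fun u => (hg u).differentiableAt) (fun u => (hg u).deriv) t s
  calc f t = Real.exp (φ t) • Real.exp (-φ t) • f t := by
        rw [smul_smul, ← Real.exp_add, add_neg_cancel, Real.exp_zero, one_smul]
    _ = Real.exp (φ t - φ s) • f s := by
        rw [hconst, smul_smul, ← Real.exp_add, sub_eq_add_neg]

local notation "𝔼³" => EuclideanSpace ℝ (Fin 3)

noncomputable def cross3CLM : 𝔼³ →L[ℝ] 𝔼³ →L[ℝ] 𝔼³ :=
  LinearMap.toContinuousLinearMap <| LinearMap.toContinuousLinearMap.toLinearMap ∘ₗ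
    ((crossProduct.compl₁₂ (WithLp.linearEquiv 2 ℝ (Fin 3 → ℝ)).toLinearMap
      (WithLp.linearEquiv 2 ℝ (Fin 3 → ℝ)).toLinearMap).compr₂
        (WithLp.linearEquiv 2 ℝ (Fin 3 → ℝ)).symm.toLinearMap)

theorem cross3CLM_apply (a b : 𝔼³) : cross3CLM a b = cross3 a b := rfl

theorem cross3_self (a : 𝔼³) : cross3 a a = 0 := by
  rw [← cross3CLM_apply]
  simp [cross3CLM, cross_self]

theorem HasDerivAt.cross3 {u v : ℝ → 𝔼³} {u' v' : 𝔼³} {x : ℝ} (hu : HasDerivAt u u' x)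
    (hv : HasDerivAt v v' x) :
    HasDerivAt (fun y => _root_.cross3 (u y) (v y))
      (_root_.cross3 (u x) v' + _root_.cross3 u' (v x)) x :=
  cross3CLM.hasDerivAt_of_bilinear (fun _ => hu) (fun _ => hv)

theorem hasDerivAt_cross3_of_hasDerivAt_smul_add_smul {r r' : ℝ → 𝔼³} {a b t : ℝ}
    (hr : HasDerivAt r (r' t) t) (hr' : HasDerivAt r' (a • r t + b • r' t) t) :
    HasDerivAt (fun s => cross3 (r s) (r' s)) (b • cross3 (r t) (r' t)) t :=
  (hr.cross3 hr').congr_deriv <| by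
    simp only [← cross3CLM_apply, map_add, map_smul]
    simp only [cross3CLM_apply, cross3_self, smul_zero, zero_add, add_zero]

theorem angular_momentum_explicit (ε : ℝ) (r : ℝ → EuclideanSpace ℝ (Fin 3))
    (hr : ContDiff ℝ 2 r) (hrne : ∀ t, r t ≠ 0)
    (heq : ∀ t, deriv (deriv r) t =
      (-(1 / ‖r t‖ ^ 3)) • r t +
        (ε / ‖r t‖ ^ 3) •
          ((4 / ‖r t‖ - ‖deriv r t‖ ^ 2) • r t +
            (4 * (inner ℝ (r t) (deriv r t) : ℝ)) • deriv r t))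
    (h : ℝ → EuclideanSpace ℝ (Fin 3))
    (hh : ∀ t, h t = cross3 (r t) (deriv r t)) :
    ∀ t : ℝ, h t = Real.exp (4 * ε * (1 / ‖r 0‖ - 1 / ‖r t‖)) • h 0 := by
  obtain rfl : h = fun t => cross3 (r t) (deriv r t) := funext hh
  have hr₁ (t : ℝ) : HasDerivAt r (deriv r t) t :=
    (hr.differentiable two_ne_zero t).hasDerivAt
  have hr₂ (t : ℝ) : HasDerivAt (deriv r) (deriv (deriv r) t) t :=
    (hr.differentiable_deriv_two t).hasDerivAt
  let φ' (t : ℝ) : ℝ := 4 * ε * ⟪r t, deriv r t⟫ / ‖r t‖ ^ 3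
  have hφ (t : ℝ) : HasDerivAt (fun s => -(4 * ε) * ‖r s‖⁻¹) (φ' t) t :=
    (((hr₁ t).norm (hrne t)).inv (norm_ne_zero_iff.mpr (hrne t))).const_mul _ |>.congr_deriv
      (by ring)
  have hL (t : ℝ) : HasDerivAt (fun s => cross3 (r s) (deriv r s))
      (φ' t • cross3 (r t) (deriv r t)) t :=
    hasDerivAt_cross3_of_hasDerivAt_smul_add_smul (a := -(1 / ‖r t‖ ^ 3) + ε / ‖r t‖ ^ 3 *
      (4 / ‖r t‖ - ‖deriv r t‖ ^ 2)) (hr₁ t) <| (hr₂ t).congr_deriv <| by rw [heq t]; module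
  intro t
  convert eq_exp_sub_smul_of_hasDerivAt hφ hL t 0 using 3
  ring
end

section
/- (Planar polar form of angular momentum evolution.) Let ε be a real number and let r, θ : ℝ → ℝ be twice differentiable with r(t) > 0 for all t, satisfying the tangential equation of motion 2 r'(t) θ'(t) + r(t) θ''(t) = (4ε/r(t)) r'(t) θ'(t). Then (d/dt)(r(t)² θ'(t)) = 4ε r'(t) θ'(t) for all t, and the quantity r(t)² θ'(t) · exp(4ε/r(t)) is constant in t. -/
/-! The tangential equation says that the angular momentum `L = r² θ'` satisfies
`L' = 4ε r' θ' = (4ε r' / r²) L`. Since `4ε r' / r²` is the derivative of `-4ε / r`,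
`exp (4ε / r)` is an integrating factor, and `L · exp (4ε / r)` has derivative zero. -/

open Real

theorem mul_exp_eq_of_hasDerivAt {L L' g g' : ℝ → ℝ}
    (hL : ∀ t, HasDerivAt L (L' t) t) (hg : ∀ t, HasDerivAt g (g' t) t)
    (h : ∀ t, L' t + L t * g' t = 0) (t s : ℝ) :
    L t * exp (g t) = L s * exp (g s) := by
  have hderiv : ∀ x, HasDerivAt (fun u => L u * exp (g u)) 0 x := fun x => by
    refine ((hL x).mul (hg x).exp).congr_deriv ?_
    linear_combination exp (g x) * h x
  exact is_const_of_deriv_eq_zero (fun x => (hderiv x).differentiableAt)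
    (fun x => (hderiv x).deriv) t s

theorem hasDerivAt_sq_mul_deriv_of_tangential {ε t : ℝ} {r θ : ℝ → ℝ}
    (hr : DifferentiableAt ℝ r t) (hθ' : DifferentiableAt ℝ (deriv θ) t) (hrt : r t ≠ 0)
    (heq : 2 * deriv r t * deriv θ t + r t * deriv (deriv θ) t =
      (4 * ε / r t) * deriv r t * deriv θ t) :
    HasDerivAt (fun s => r s ^ 2 * deriv θ s) (4 * ε * deriv r t * deriv θ t) t := by
  refine ((hr.hasDerivAt.fun_pow 2).mul hθ'.hasDerivAt).congr_deriv ?_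
  rw [div_mul_eq_mul_div, div_mul_eq_mul_div, eq_div_iff hrt] at heq
  linear_combination heq

theorem polar_angular_momentum_evolution_general (ε : ℝ) (r θ : ℝ → ℝ)
    (hr : Differentiable ℝ r)
    (hθ' : Differentiable ℝ (deriv θ))
    (hrpos : ∀ t, 0 < r t)
    (heq : ∀ t, 2 * deriv r t * deriv θ t + r t * deriv (deriv θ) t =
      (4 * ε / r t) * deriv r t * deriv θ t) :
    (∀ t : ℝ, deriv (fun s => r s ^ 2 * deriv θ s) t = 4 * ε * deriv r t * deriv θ t) ∧
      (∀ t : ℝ, r t ^ 2 * deriv θ t * Real.exp (4 * ε / r t) =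
        r 0 ^ 2 * deriv θ 0 * Real.exp (4 * ε / r 0)) := by
  have hL : ∀ t, HasDerivAt (fun s => r s ^ 2 * deriv θ s) (4 * ε * deriv r t * deriv θ t) t :=
    fun t => hasDerivAt_sq_mul_deriv_of_tangential (hr t) (hθ' t) (hrpos t).ne' (heq t)
  have hg : ∀ t, HasDerivAt (fun s => 4 * ε / r s) (-(4 * ε) * deriv r t / r t ^ 2) t := by
    intro t
    refine ((hasDerivAt_const t (4 * ε)).div (hr t).hasDerivAt (hrpos t).ne').congr_deriv ?_
    ring
  refine ⟨fun t => (hL t).deriv, fun t => mul_exp_eq_of_hasDerivAt hL hg ?_ t 0⟩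
  intro t
  field_simp [(hrpos t).ne']
  ring

theorem polar_angular_momentum_evolution (ε : ℝ) (r θ : ℝ → ℝ)
    (hr : Differentiable ℝ r) (hr' : Differentiable ℝ (deriv r))
    (hθ : Differentiable ℝ θ) (hθ' : Differentiable ℝ (deriv θ))
    (hrpos : ∀ t, 0 < r t)
    (heq : ∀ t, 2 * deriv r t * deriv θ t + r t * deriv (deriv θ) t =
      (4 * ε / r t) * deriv r t * deriv θ t) :
    (∀ t : ℝ, deriv (fun s => r s ^ 2 * deriv θ s) t = 4 * ε * deriv r t * deriv θ t) ∧
      (∀ t : ℝ, r t ^ 2 * deriv θ t * Real.exp (4 * ε / r t) =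
        r 0 ^ 2 * deriv θ 0 * Real.exp (4 * ε / r 0)) :=
  polar_angular_momentum_evolution_general ε r θ hr hθ' hrpos heq
end
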